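/- For even n ≥ 2, the chromatic number of the cyclic Latin square graph T_n equals n + 2. -/

import Mathlib

/-- The cyclic Latin square graph of order `n`. -/
def cyclicLatinSquareGraph (n : ℕ) : SimpleGraph (ZMod n × ZMod n) :=
  SimpleGraph.fromRel (fun x y => x.1 = y.1 ∨ x.2 = y.2 ∨ x.1 + x.2 = y.1 + y.2)

/-!
A colour class of `T_n` meets every row, column and anti-diagonal at most once. If it had `n`
cells, then `x ↦ x.1`, `x ↦ x.2` and `x ↦ x.1 + x.2` would all be bijections onto `ZMod n`, so
summing gives `∑ z + ∑ z = ∑ z`, i.e. `∑ z = 0`. For `n = 2k` the sum is `k(2k - 1) ≡ k ≠ 0`.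
Hence every class has at most `n - 1` cells and `n + 1` colours cover at most `n² - 1` cells.
The matching `n + 2`-colouring is explicit.
-/

open Finset

theorem Int.eq_or_eq_add_or_eq_add_of_dvd_sub {m x y : ℤ} (h : m ∣ x - y) (hxy : x - y < 2 * m)
    (hyx : y - x < 2 * m) : x = y ∨ x = y + m ∨ y = x + m := by
  obtain ⟨t, ht⟩ := h
  have : -2 < t := by nlinarith
  have : t < 2 := by nlinarith
  interval_cases t <;> omega

theorem ZMod.val_add_val_eq_or {n : ℕ} [NeZero n] (a b : ZMod n) :
    a.val + b.val = (a + b).val ∨ a.val + b.val = (a + b).val + n := by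
  rcases lt_or_ge (a.val + b.val) n with h | h
  · exact .inl (ZMod.val_add_of_lt h).symm
  · exact .inr (ZMod.val_add_val_of_le h)

theorem ZMod.sum_univ_eq_natCast_sum_range (n : ℕ) [NeZero n] :
    ∑ z : ZMod n, z = ((∑ i ∈ range n, i : ℕ) : ZMod n) := by
  obtain ⟨m, rfl⟩ : ∃ m, n = m + 1 := Nat.exists_eq_succ_of_ne_zero (NeZero.ne n)
  rw [Nat.cast_sum, ← Fin.sum_univ_eq_sum_range]
  exact Finset.sum_congr rfl fun i _ => (Fin.cast_val_eq_self i).symm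

theorem ZMod.sum_univ_ne_zero_of_even {n : ℕ} [NeZero n] (hn : Even n) : ∑ z : ZMod n, z ≠ 0 := by
  obtain ⟨k, rfl⟩ := even_iff_two_dvd.mp hn
  have hk : 0 < k := by have := NeZero.ne (2 * k); omega
  have : 2 * k * (2 * k - 1) / 2 = k * (2 * k - 1) := by
    rw [mul_assoc, Nat.mul_div_cancel_left _ two_pos]
  rw [ZMod.sum_univ_eq_natCast_sum_range, sum_range_id, this, ne_eq, ZMod.natCast_eq_zero_iff]
  intro h
  have := Nat.dvd_of_mul_dvd_mul_left hk ((dvd_of_eq (mul_comm k 2)).trans h)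
  omega

theorem Finset.sum_eq_sum_univ_of_injOn {α β : Type*} [Fintype β] [AddCommMonoid β]
    {s : Finset α} {f : α → β} (hf : Set.InjOn f s) (hs : #s = Fintype.card β) :
    ∑ x ∈ s, f x = ∑ b, b := by
  classical
  have : s.image f = univ := eq_univ_of_card _ (by rw [card_image_of_injOn hf, hs])
  rw [← this, sum_image hf]

theorem sum_univ_eq_zero_of_injOn_fst_snd_add {G : Type*} [AddCommGroup G] [Fintype G]
    {s : Finset (G × G)} (hs : #s = Fintype.card G) (h₁ : Set.InjOn Prod.fst (s : Set (G × G)))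
    (h₂ : Set.InjOn Prod.snd (s : Set (G × G)))
    (h₃ : Set.InjOn (fun x : G × G => x.1 + x.2) s) : ∑ g : G, g = 0 := by
  have h := calc ∑ g : G, g
      = ∑ x ∈ s, (x.1 + x.2) := (sum_eq_sum_univ_of_injOn h₃ hs).symm
    _ = ∑ x ∈ s, x.1 + ∑ x ∈ s, x.2 := sum_add_distrib
    _ = ∑ g : G, g + ∑ g : G, g := by
      rw [sum_eq_sum_univ_of_injOn h₁ hs, sum_eq_sum_univ_of_injOn h₂ hs]
  exact left_eq_add.mp h

theorem SimpleGraph.card_le_mul_of_colorable {V : Type*} [Fintype V] {G : SimpleGraph V}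
    {m a : ℕ} (hG : G.Colorable m) (h : ∀ s : Finset V, G.IsIndepSet s → #s ≤ a) :
    Fintype.card V ≤ a * m := by
  classical
  obtain ⟨C⟩ := hG
  have := card_le_mul_card_image_of_maps_to (s := univ) (t := univ) (fun v _ => mem_univ (C v)) a
    fun c _ => h _ fun v hv w hw _ =>
      C.not_adj_of_mem_colorClass (c := c) (by simpa using hv : C v = c)
        (by simpa using hw : C w = c)
  simpa using this

theorem cyclicLatinSquareGraph_adj {n : ℕ} {x y : ZMod n × ZMod n} :
    (cyclicLatinSquareGraph n).Adj x y ↔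
      x ≠ y ∧ (x.1 = y.1 ∨ x.2 = y.2 ∨ x.1 + x.2 = y.1 + y.2) := by
  rw [cyclicLatinSquareGraph, SimpleGraph.fromRel_adj]
  constructor
  · rintro ⟨hne, h | h⟩ <;> exact ⟨hne, by tauto⟩
  · tauto

theorem SimpleGraph.IsIndepSet.eq_of_cyclicLatinSquareGraph {n : ℕ} {s : Set (ZMod n × ZMod n)}
    (hs : (cyclicLatinSquareGraph n).IsIndepSet s) {x y : ZMod n × ZMod n} (hx : x ∈ s)
    (hy : y ∈ s) (h : x.1 = y.1 ∨ x.2 = y.2 ∨ x.1 + x.2 = y.1 + y.2) : x = y := by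
  by_contra hne
  exact hs hx hy hne (cyclicLatinSquareGraph_adj.mpr ⟨hne, h⟩)

theorem card_le_sub_one_of_isIndepSet_cyclicLatinSquareGraph {n : ℕ} [NeZero n] (hn : Even n)
    {s : Finset (ZMod n × ZMod n)} (hs : (cyclicLatinSquareGraph n).IsIndepSet s) :
    #s ≤ n - 1 := by
  have h₁ : Set.InjOn Prod.fst s := fun x hx y hy h =>
    hs.eq_of_cyclicLatinSquareGraph hx hy (.inl h)
  have h₂ : Set.InjOn Prod.snd s := fun x hx y hy h =>
    hs.eq_of_cyclicLatinSquareGraph hx hy (.inr (.inl h))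
  have h₃ : Set.InjOn (fun x : ZMod n × ZMod n => x.1 + x.2) s := fun x hx y hy h =>
    hs.eq_of_cyclicLatinSquareGraph hx hy (.inr (.inr h))
  have hle : #s ≤ n := by simpa using card_le_card_of_injOn _ (fun x _ => mem_univ x.1) h₁
  have hne : #s ≠ n := fun hcard => ZMod.sum_univ_ne_zero_of_even hn
    (sum_univ_eq_zero_of_injOn_fst_snd_add (by simpa using hcard) h₁ h₂ h₃)
  omega

theorem cyclicLatinSquareGraph_not_colorable {n : ℕ} [NeZero n] (hn : Even n) :
    ¬ (cyclicLatinSquareGraph n).Colorable (n + 1) := by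
  intro h
  have := (cyclicLatinSquareGraph n).card_le_mul_of_colorable h fun s hs =>
    card_le_sub_one_of_isIndepSet_cyclicLatinSquareGraph hn hs
  obtain ⟨m, rfl⟩ : ∃ m, n = m + 1 := Nat.exists_eq_succ_of_ne_zero (NeZero.ne n)
  simp only [Fintype.card_prod, ZMod.card, Nat.add_sub_cancel] at this
  nlinarith

/-- The colour of cell `(i, j)` (indices from `0`, `n = 2k`), to be read in `ZMod (2k + 2)`. -/
def latinColor (k i j : ℕ) : ℤ := j - i - if i < k then 0 else 1

theorem latinColor_not_modEq {k i j a b : ℕ} (hi : i < 2 * k) (hj : j < 2 * k) (ha : a < 2 * k)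
    (hb : b < 2 * k) (hne : i ≠ a ∨ j ≠ b)
    -- the last three cases unfold `i + j ≡ a + b [MOD 2 * k]`
    (hline : i = a ∨ j = b ∨ i + j = a + b ∨ i + j = a + b + 2 * k ∨ a + b = i + j + 2 * k) :
    ¬ latinColor k i j ≡ latinColor k a b [ZMOD 2 * k + 2] := by
  intro h
  have hbound : ∀ i j, i < 2 * k → j < 2 * k →
      -(2 * k : ℤ) ≤ latinColor k i j ∧ latinColor k i j < 2 * k := by
    intro i j hi hj
    unfold latinColor
    split_ifs <;> omega
  have := hbound i j hi hj
  have := hbound a b ha hb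
  rcases Int.eq_or_eq_add_or_eq_add_of_dvd_sub (Int.modEq_iff_dvd.mp h) (by omega) (by omega)
    with h | h | h <;> unfold latinColor at h <;> split_ifs at h <;> omega

theorem cyclicLatinSquareGraph_colorable {n : ℕ} [NeZero n] (hn : Even n) :
    (cyclicLatinSquareGraph n).Colorable (n + 2) := by
  obtain ⟨k, rfl⟩ := even_iff_two_dvd.mp hn
  have C : (cyclicLatinSquareGraph (2 * k)).Coloring (ZMod (2 * k + 2)) :=
    .mk (fun x => latinColor k x.1.val x.2.val) fun {x y} hxy => by
      obtain ⟨hne, hline⟩ := cyclicLatinSquareGraph_adj.mp hxy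
      have hne' : x.1.val ≠ y.1.val ∨ x.2.val ≠ y.2.val := by
        contrapose! hne
        exact Prod.ext (ZMod.val_injective _ hne.1) (ZMod.val_injective _ hne.2)
      have hline' : x.1.val = y.1.val ∨ x.2.val = y.2.val ∨ x.1.val + x.2.val = y.1.val + y.2.val ∨
          x.1.val + x.2.val = y.1.val + y.2.val + 2 * k ∨
          y.1.val + y.2.val = x.1.val + x.2.val + 2 * k := by
        rcases hline with h | h | h
        · exact .inl (congrArg ZMod.val h)
        · exact .inr (.inl (congrArg ZMod.val h))
        · have := congrArg ZMod.val h
          have := ZMod.val_add_val_eq_or x.1 x.2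
          have := ZMod.val_add_val_eq_or y.1 y.2
          omega
      rw [Ne, ZMod.intCast_eq_intCast_iff]
      exact_mod_cast latinColor_not_modEq (ZMod.val_lt _) (ZMod.val_lt _) (ZMod.val_lt _)
        (ZMod.val_lt _) hne' hline'
  simpa using C.colorable

theorem cyclic_chromaticNumber_even (n : ℕ) (hn : 2 ≤ n) (heven : Even n) :
    (cyclicLatinSquareGraph n).chromaticNumber = n + 2 := by
  have : NeZero n := ⟨by omega⟩
  rw [show (n : ℕ∞) + 2 = (n + 1 : ℕ) + 1 by push_cast; ring,
    SimpleGraph.chromaticNumber_eq_iff_colorable_not_colorable]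
  exact ⟨cyclicLatinSquareGraph_colorable heven, cyclicLatinSquareGraph_not_colorable heven⟩
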